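/- Let H₀ = -Δ on L²(ℝⁿ) and let ψ be a C¹ function with |ψ(x)| ≤ C(1+|x|)^{-μ} and |∇ψ(x)| ≤ C(1+|x|)^{-1-μ} for some μ > 0. Let H_A = (i∇ + A)² + V and H_{A'} = (i∇ + A + ∇ψ)² + V, both self-adjoint with wave operators W_±(H_A, H₀) and W_±(H_{A'}, H₀) existing and complete. Then the scattering operators coincide: S(H_{A'}, H₀) = S(H_A, H₀). -/

import Mathlib

/-!
Since `e^{iψ} - 1` is bounded by `2` and, by the decay of `ψ`, by `C (1+r)^{-μ}` outside the
ball of radius `r`, multiplication by `e^{iψ}` differs from the identity by an arbitrarily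
small amount on states whose mass has left every ball. The free evolution produces such
states as `t → ±∞`, so `e^{itH_{A'}} e^{-itH₀} = M* e^{itH_A} M e^{-itH₀}` has the same limit
as `M* e^{itH_A} e^{-itH₀}`: `W_±(H_{A'}) = M* W_±(H_A)`. The factors `M M* = 1` then cancel in
`S = W_+* W_-`.
-/

open MeasureTheory Complex Filter Topology

namespace MeasureTheory.L2

variable {α 𝕜 : Type*} [MeasurableSpace α] {ν : Measure α} [RCLike 𝕜]

theorem integrable_norm_sq (g : Lp 𝕜 2 ν) : Integrable (fun x => ‖(g : α → 𝕜) x‖ ^ 2) ν :=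
  (L2.integrable_inner (𝕜 := 𝕜) g g).re.congr
    (Eventually.of_forall fun _ => inner_self_eq_norm_sq (𝕜 := 𝕜) _)

theorem norm_sq_eq_integral (g : Lp 𝕜 2 ν) : ‖g‖ ^ 2 = ∫ x, ‖(g : α → 𝕜) x‖ ^ 2 ∂ν := by
  rw [@norm_sq_eq_re_inner 𝕜, L2.inner_def, ← integral_re (L2.integrable_inner g g)]
  exact integral_congr_ae (Eventually.of_forall fun x => inner_self_eq_norm_sq (𝕜 := 𝕜) _)

theorem norm_sq_le_of_ae_eq_mul {s : Set α} (hs : MeasurableSet s) {d : α → 𝕜} {a b : ℝ}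
    (ha : ∀ x ∈ s, ‖d x‖ ≤ a) (hb : ∀ x ∉ s, ‖d x‖ ≤ b) {g h : Lp 𝕜 2 ν}
    (hh : (h : α → 𝕜) =ᵐ[ν] fun x => d x * g x) :
    ‖h‖ ^ 2 ≤ a ^ 2 * ∫ x in s, ‖(g : α → 𝕜) x‖ ^ 2 ∂ν + b ^ 2 * ‖g‖ ^ 2 := by
  have hg := integrable_norm_sq g
  have h_on_s : ∫ x in s, ‖(h : α → 𝕜) x‖ ^ 2 ∂ν ≤ a ^ 2 * ∫ x in s, ‖(g : α → 𝕜) x‖ ^ 2 ∂ν := by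
    rw [← integral_const_mul]
    refine integral_mono_ae (integrable_norm_sq h).restrict (hg.const_mul _).restrict ?_
    filter_upwards [ae_restrict_of_ae hh, ae_restrict_mem hs] with x hx hxs
    rw [hx, norm_mul, mul_pow]
    gcongr
    exact ha x hxs
  have h_off_s : ∫ x in sᶜ, ‖(h : α → 𝕜) x‖ ^ 2 ∂ν ≤ b ^ 2 * ‖g‖ ^ 2 := calc
    _ ≤ ∫ x in sᶜ, b ^ 2 * ‖(g : α → 𝕜) x‖ ^ 2 ∂ν := by
      refine integral_mono_ae (integrable_norm_sq h).restrict (hg.const_mul _).restrict ?_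
      filter_upwards [ae_restrict_of_ae hh, ae_restrict_mem hs.compl] with x hx hxs
      rw [hx, norm_mul, mul_pow]
      gcongr
      exact hb x hxs
    _ ≤ b ^ 2 * ‖g‖ ^ 2 := by
      rw [integral_const_mul, norm_sq_eq_integral]
      exact mul_le_mul_of_nonneg_left
        (setIntegral_le_integral hg (Eventually.of_forall fun _ => sq_nonneg _)) (sq_nonneg _)
  rw [norm_sq_eq_integral, ← integral_add_compl hs (integrable_norm_sq h)]
  linarith

end MeasureTheory.L2

section Decay

variable {E : Type*} [NormedAddCommGroup E] {C μ : ℝ} {ψ : E → ℝ}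

theorem norm_exp_I_mul_sub_one_le_of_decay (hμ : 0 ≤ μ)
    (hψ_decay : ∀ x, |ψ x| ≤ C * (1 + ‖x‖) ^ (-μ)) {r : ℝ} (hr : 0 ≤ r) {x : E}
    (hx : r ≤ ‖x‖) : ‖exp (I * ψ x) - 1‖ ≤ C * (1 + r) ^ (-μ) := by
  have hC : 0 ≤ C :=
    nonneg_of_mul_nonneg_left ((abs_nonneg _).trans (hψ_decay x)) (by positivity)
  calc ‖exp (I * ψ x) - 1‖ ≤ |ψ x| :=
        Real.norm_eq_abs (ψ x) ▸ Real.norm_exp_I_mul_ofReal_sub_one_le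
    _ ≤ C * (1 + ‖x‖) ^ (-μ) := hψ_decay x
    _ ≤ C * (1 + r) ^ (-μ) :=
      mul_le_mul_of_nonneg_left (Real.rpow_le_rpow_of_nonpos (by linarith) (by linarith)
        (by linarith)) hC

variable [MeasurableSpace E] [OpensMeasurableSpace E] {ν : Measure E}
  {M : Lp ℂ 2 ν →L[ℂ] Lp ℂ 2 ν}

theorem norm_sq_mul_exp_sub_self_le (hμ : 0 ≤ μ) (hψ_decay : ∀ x, |ψ x| ≤ C * (1 + ‖x‖) ^ (-μ))
    (hM : ∀ f : Lp ℂ 2 ν, (M f : E → ℂ) =ᵐ[ν] fun x => exp (I * ψ x) * f x)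
    {r : ℝ} (hr : 0 ≤ r) (g : Lp ℂ 2 ν) :
    ‖M g - g‖ ^ 2 ≤ 4 * ∫ x in Metric.ball 0 r, ‖(g : E → ℂ) x‖ ^ 2 ∂ν
      + (C * (1 + r) ^ (-μ)) ^ 2 * ‖g‖ ^ 2 := by
  rw [show (4 : ℝ) = 2 ^ 2 by norm_num]
  refine L2.norm_sq_le_of_ae_eq_mul Metric.isOpen_ball.measurableSet
    (d := fun x => exp (I * ψ x) - 1) (fun x _ => ?_) (fun x hx => ?_) ?_
  · calc ‖exp (I * ψ x) - 1‖ ≤ ‖exp (I * ψ x)‖ + ‖(1 : ℂ)‖ := norm_sub_le _ _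
      _ = 2 := by rw [norm_exp_I_mul_ofReal, norm_one]; norm_num
  · rw [Metric.mem_ball, dist_zero_right, not_lt] at hx
    exact norm_exp_I_mul_sub_one_le_of_decay hμ hψ_decay hr hx
  · filter_upwards [Lp.coeFn_sub (M g) g, hM g] with x hsub hMg
    rw [hsub, Pi.sub_apply, hMg, sub_mul, one_mul]

theorem tendsto_mul_exp_sub_self {ι : Type*} {l : Filter ι} (hμ : 0 < μ)
    (hψ_decay : ∀ x, |ψ x| ≤ C * (1 + ‖x‖) ^ (-μ))
    (hM : ∀ f : Lp ℂ 2 ν, (M f : E → ℂ) =ᵐ[ν] fun x => exp (I * ψ x) * f x)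
    {g : ι → Lp ℂ 2 ν} {K : ℝ} (hg : ∀ t, ‖g t‖ ≤ K)
    (hball : ∀ r, 0 < r →
      Tendsto (fun t => ∫ x in Metric.ball 0 r, ‖(g t : E → ℂ) x‖ ^ 2 ∂ν) l (𝓝 0)) :
    Tendsto (fun t => M (g t) - g t) l (𝓝 0) := by
  rw [NormedAddGroup.tendsto_nhds_zero]
  intro ε hε
  have h_tail : Tendsto (fun r : ℝ => (C * (1 + r) ^ (-μ)) ^ 2 * K ^ 2) atTop (𝓝 0) := by
    have h := (((tendsto_rpow_neg_atTop hμ).comp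
      (tendsto_atTop_add_const_left _ 1 tendsto_id)).const_mul C).pow 2 |>.mul_const (K ^ 2)
    simpa using h
  obtain ⟨r, hr_tail, hr⟩ :=
    ((h_tail.eventually (gt_mem_nhds (by positivity : 0 < ε ^ 2 / 2))).and
      (eventually_gt_atTop 0)).exists
  filter_upwards [(hball r hr).eventually (gt_mem_nhds (by positivity : 0 < ε ^ 2 / 8))]
    with t h_ball
  have h_bound := norm_sq_mul_exp_sub_self_le hμ.le hψ_decay hM hr.le (g t)
  have h_gK : (C * (1 + r) ^ (-μ)) ^ 2 * ‖g t‖ ^ 2 ≤ (C * (1 + r) ^ (-μ)) ^ 2 * K ^ 2 := by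
    gcongr
    exact hg t
  exact lt_of_pow_lt_pow_left₀ 2 hε.le (by linarith)

end Decay

theorem tendsto_gauge_conj {F ι : Type*} [NormedAddCommGroup F] [NormedSpace ℂ F]
    {M M' : F →L[ℂ] F} {V V' : ι → F →L[ℂ] F} (hV : ∀ t f, ‖V t f‖ ≤ ‖f‖)
    (hV' : ∀ t f, V' t f = M' (V t (M f))) {l : Filter ι} {g : ι → F} {w : F}
    (hMg : Tendsto (fun t => M (g t) - g t) l (𝓝 0))
    (hw : Tendsto (fun t => V t (g t)) l (𝓝 w)) :
    Tendsto (fun t => V' t (g t)) l (𝓝 (M' w)) := by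
  have h_split : ∀ t, V' t (g t) = M' (V t (M (g t) - g t)) + M' (V t (g t)) := fun t => by
    rw [hV', ← map_add, ← map_add, sub_add_cancel]
  have h_err : Tendsto (fun t => M' (V t (M (g t) - g t))) l (𝓝 0) := by
    refine squeeze_zero_norm (fun t => (M'.le_opNorm _).trans ?_)
      (by simpa using (tendsto_zero_iff_norm_tendsto_zero.mp hMg).const_mul ‖M'‖)
    exact mul_le_mul_of_nonneg_left (hV _ _) (norm_nonneg _)
  simpa [h_split] using h_err.add ((M'.continuous.tendsto w).comp hw)

namespace ContinuousLinearMap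

theorem adjoint_comp_adjoint_comp_of_comp_adjoint_eq_id {𝕜 H K : Type*} [RCLike 𝕜]
    [NormedAddCommGroup H] [InnerProductSpace 𝕜 H] [CompleteSpace H]
    [NormedAddCommGroup K] [InnerProductSpace 𝕜 K] [CompleteSpace K]
    {M : H →L[𝕜] H} (hM : M ∘L adjoint M = ContinuousLinearMap.id 𝕜 H) (A B : K →L[𝕜] H) :
    adjoint (adjoint M ∘L A) ∘L (adjoint M ∘L B) = adjoint A ∘L B := by
  rw [adjoint_comp, adjoint_adjoint, comp_assoc, ← comp_assoc M, hM, id_comp]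

end ContinuousLinearMap

theorem scattering_operator_gauge_invariant_general
    (n : ℕ) (C μ : ℝ) (hμ : 0 < μ)
    (ψ : EuclideanSpace ℝ (Fin n) → ℝ)
    (hψ_decay : ∀ x, |ψ x| ≤ C * (1 + ‖x‖) ^ (-μ))
    (M : Lp ℂ 2 (volume : Measure (EuclideanSpace ℝ (Fin n))) →L[ℂ]
         Lp ℂ 2 (volume : Measure (EuclideanSpace ℝ (Fin n))))
    -- `M` is multiplication by `e^{iψ}` (a unitary):
    (hM : ∀ f : Lp ℂ 2 (volume : Measure (EuclideanSpace ℝ (Fin n))),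
      (M f : EuclideanSpace ℝ (Fin n) → ℂ)
        =ᵐ[volume] fun x => Complex.exp (Complex.I * (ψ x : ℂ)) * f x)
    (hM_unitary : (ContinuousLinearMap.adjoint M).comp M = ContinuousLinearMap.id ℂ _ ∧
      M.comp (ContinuousLinearMap.adjoint M) = ContinuousLinearMap.id ℂ _)
    (U₀ UA UA' : ℝ → Lp ℂ 2 (volume : Measure (EuclideanSpace ℝ (Fin n))) →L[ℂ]
         Lp ℂ 2 (volume : Measure (EuclideanSpace ℝ (Fin n))))
    (hU₀_iso : ∀ t f, ‖U₀ t f‖ = ‖f‖) (hUA_iso : ∀ t f, ‖UA t f‖ = ‖f‖)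
    -- the gauge relation `e^{-itH_{A'}} = M* e^{-itH_A} M`:
    (hgauge : ∀ t f, UA' t f = (ContinuousLinearMap.adjoint M) (UA t (M f)))
    -- the free evolution propagates mass away from every ball:
    (hfree : ∀ (f : Lp ℂ 2 (volume : Measure (EuclideanSpace ℝ (Fin n)))) (r : ℝ), 0 < r →
      Tendsto (fun t => ∫ x in Metric.ball (0 : EuclideanSpace ℝ (Fin n)) r,
        ‖(U₀ t f : EuclideanSpace ℝ (Fin n) → ℂ) x‖ ^ 2) (atBot ⊔ atTop) (nhds 0))
    (WpA WmA WpA' WmA' : Lp ℂ 2 (volume : Measure (EuclideanSpace ℝ (Fin n))) →L[ℂ]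
         Lp ℂ 2 (volume : Measure (EuclideanSpace ℝ (Fin n))))
    -- existence of the wave operators `W_± = s-lim_{t→±∞} e^{itH} e^{-itH₀}`:
    (hWpA : ∀ f, Tendsto (fun t : ℝ => UA (-t) (U₀ t f)) atTop (nhds (WpA f)))
    (hWmA : ∀ f, Tendsto (fun t : ℝ => UA (-t) (U₀ t f)) atBot (nhds (WmA f)))
    (hWpA' : ∀ f, Tendsto (fun t : ℝ => UA' (-t) (U₀ t f)) atTop (nhds (WpA' f)))
    (hWmA' : ∀ f, Tendsto (fun t : ℝ => UA' (-t) (U₀ t f)) atBot (nhds (WmA' f))) :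
    (ContinuousLinearMap.adjoint WpA').comp WmA'
      = (ContinuousLinearMap.adjoint WpA).comp WmA := by
  have hMU₀ (f) : Tendsto (fun t => M (U₀ t f) - U₀ t f) (atBot ⊔ atTop) (𝓝 0) :=
    tendsto_mul_exp_sub_self hμ hψ_decay hM (fun t => (hU₀_iso t f).le) (hfree f)
  have h_wave {l : Filter ℝ} [l.NeBot] (hl : l ≤ atBot ⊔ atTop) {W W' : _ →L[ℂ] _}
      (hW : ∀ f, Tendsto (fun t : ℝ => UA (-t) (U₀ t f)) l (𝓝 (W f)))
      (hW' : ∀ f, Tendsto (fun t : ℝ => UA' (-t) (U₀ t f)) l (𝓝 (W' f))) :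
      W' = (ContinuousLinearMap.adjoint M).comp W :=
    ContinuousLinearMap.ext fun f => tendsto_nhds_unique (hW' f) <|
      tendsto_gauge_conj (fun t f => (hUA_iso (-t) f).le) (fun t => hgauge (-t))
        ((hMU₀ f).mono_left hl) (hW f)
  rw [h_wave le_sup_right hWpA hWpA', h_wave le_sup_left hWmA hWmA']
  exact ContinuousLinearMap.adjoint_comp_adjoint_comp_of_comp_adjoint_eq_id hM_unitary.2 WpA WmA

/-- gauge invariance of the scattering operator. If `H_{A'}` is obtained
from `H_A` by the gauge transformation `A ↦ A + ∇ψ` with `|ψ(x)| ≤ C(1+|x|)^{-μ}`,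
`|∇ψ(x)| ≤ C(1+|x|)^{-1-μ}`, `μ > 0`, and both pairs of wave operators relative to the
free evolution `U₀(t) = e^{-itH₀}` exist (and `U₀` propagates mass to infinity), then
`S(H_{A'}, H₀) = S(H_A, H₀)`. The evolutions are encoded as unitary groups, the gauge
relation as `e^{itH_{A'}} = M* e^{itH_A} M` with `M` multiplication by `e^{iψ}`. -/
theorem scattering_operator_gauge_invariant
    (n : ℕ) (hn : 1 ≤ n) (C μ : ℝ) (hμ : 0 < μ)
    (ψ : EuclideanSpace ℝ (Fin n) → ℝ) (hψC1 : ContDiff ℝ 1 ψ)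
    (hψ_decay : ∀ x, |ψ x| ≤ C * (1 + ‖x‖) ^ (-μ))
    (hψ_grad_decay : ∀ x, ‖fderiv ℝ ψ x‖ ≤ C * (1 + ‖x‖) ^ (-(1 + μ)))
    (M : Lp ℂ 2 (volume : Measure (EuclideanSpace ℝ (Fin n))) →L[ℂ]
         Lp ℂ 2 (volume : Measure (EuclideanSpace ℝ (Fin n))))
    -- `M` is multiplication by `e^{iψ}` (a unitary):
    (hM : ∀ f : Lp ℂ 2 (volume : Measure (EuclideanSpace ℝ (Fin n))),
      (M f : EuclideanSpace ℝ (Fin n) → ℂ)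
        =ᵐ[volume] fun x => Complex.exp (Complex.I * (ψ x : ℂ)) * f x)
    (hM_unitary : (ContinuousLinearMap.adjoint M).comp M = ContinuousLinearMap.id ℂ _ ∧
      M.comp (ContinuousLinearMap.adjoint M) = ContinuousLinearMap.id ℂ _)
    (U₀ UA UA' : ℝ → Lp ℂ 2 (volume : Measure (EuclideanSpace ℝ (Fin n))) →L[ℂ]
         Lp ℂ 2 (volume : Measure (EuclideanSpace ℝ (Fin n))))
    (hU₀_iso : ∀ t f, ‖U₀ t f‖ = ‖f‖) (hUA_iso : ∀ t f, ‖UA t f‖ = ‖f‖)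
    (hUA'_iso : ∀ t f, ‖UA' t f‖ = ‖f‖)
    -- the gauge relation `e^{-itH_{A'}} = M* e^{-itH_A} M`:
    (hgauge : ∀ t f, UA' t f = (ContinuousLinearMap.adjoint M) (UA t (M f)))
    -- the free evolution propagates mass away from every ball:
    (hfree : ∀ (f : Lp ℂ 2 (volume : Measure (EuclideanSpace ℝ (Fin n)))) (r : ℝ), 0 < r →
      Tendsto (fun t => ∫ x in Metric.ball (0 : EuclideanSpace ℝ (Fin n)) r,
        ‖(U₀ t f : EuclideanSpace ℝ (Fin n) → ℂ) x‖ ^ 2) (atBot ⊔ atTop) (nhds 0))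
    (WpA WmA WpA' WmA' : Lp ℂ 2 (volume : Measure (EuclideanSpace ℝ (Fin n))) →L[ℂ]
         Lp ℂ 2 (volume : Measure (EuclideanSpace ℝ (Fin n))))
    -- existence of the wave operators `W_± = s-lim_{t→±∞} e^{itH} e^{-itH₀}`:
    (hWpA : ∀ f, Tendsto (fun t : ℝ => UA (-t) (U₀ t f)) atTop (nhds (WpA f)))
    (hWmA : ∀ f, Tendsto (fun t : ℝ => UA (-t) (U₀ t f)) atBot (nhds (WmA f)))
    (hWpA' : ∀ f, Tendsto (fun t : ℝ => UA' (-t) (U₀ t f)) atTop (nhds (WpA' f)))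
    (hWmA' : ∀ f, Tendsto (fun t : ℝ => UA' (-t) (U₀ t f)) atBot (nhds (WmA' f))) :
    (ContinuousLinearMap.adjoint WpA').comp WmA'
      = (ContinuousLinearMap.adjoint WpA).comp WmA :=
  scattering_operator_gauge_invariant_general n C μ hμ ψ hψ_decay M hM hM_unitary U₀ UA UA' hU₀_iso
    hUA_iso hgauge hfree WpA WmA WpA' WmA' hWpA hWmA hWpA' hWmA'
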